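/- On D, the reduced angular Bianchi equations of Kerr–Newman hold: (e₁ + i e₂)(conj(P)) = −(3 conj(P) − 2 P^F conj(P^F)) H₁ and (e₁ + i e₂)(P) = −(3 P − 2 P^F conj(P^F)) H̲₁, where P := −2M/q³ + 2Q²/(q³ q̄), P^F := Q/q̄², H₁ := i a sin θ · q/|q|³ and H̲₁ := −i a sin θ · q̄/|q|³. -/

import Mathlib

/-!
`P = F(q, q̄)` with `F(z, w) = -2M/z³ + 2Q²/(z³w)`, and since `M` and `Q` are real,
`conj P = F(q̄, q)`. Neither `q` nor `q̄` depends on `t` or `φ`, so `e₁ + i e₂` acts on both as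
`|q|⁻¹ ∂_θ`, and `∂_θ q = -∂_θ q̄ = -i a sin θ`. By the chain rule both equations reduce to the
rational identity `∂_z F - ∂_w F = -(3F - 2Q²/(z²w²))/z`, together with `|q|² = q q̄` and
`P^F conj(P^F) = Q²/(q² q̄²)`.
-/

noncomputable section

namespace KerrNewman

/-- A point `x = (t, r, θ, φ)` of the coordinate domain, with indices `0,1,2,3`. -/
abbrev Pt : Type := Fin 4 → ℝ

/-- Partial derivative `∂_μ` of a complex-valued function on `ℝ⁴`. -/
def pdC (μ : Fin 4) (f : Pt → ℂ) (x : Pt) : ℂ := fderiv ℝ f x (Pi.single μ 1)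

/-- Partial derivative `∂_μ` of a real-valued function on `ℝ⁴`. -/
def pdR (μ : Fin 4) (f : Pt → ℝ) (x : Pt) : ℝ := fderiv ℝ f x (Pi.single μ 1)

/-- `Δ = r² − 2Mr + a² + Q²`. -/
def Del (M a Q : ℝ) (x : Pt) : ℝ := x 1 ^ 2 - 2 * M * x 1 + a ^ 2 + Q ^ 2

/-- `|q|² = r² + a² cos²θ`. -/
def q2 (a : ℝ) (x : Pt) : ℝ := x 1 ^ 2 + a ^ 2 * Real.cos (x 2) ^ 2

/-- `q = r + i a cos θ`. -/
def qC (a : ℝ) (x : Pt) : ℂ := (x 1 : ℂ) + Complex.I * (a : ℂ) * (Real.cos (x 2) : ℂ)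

/-- `q̄ = r − i a cos θ`. -/
def qbarC (a : ℝ) (x : Pt) : ℂ := (x 1 : ℂ) - Complex.I * (a : ℂ) * (Real.cos (x 2) : ℂ)

/-- `e₄ = ((r²+a²)/Δ)∂_t + ∂_r + (a/Δ)∂_φ` as an operator on complex functions. -/
def e4 (M a Q : ℝ) (f : Pt → ℂ) (x : Pt) : ℂ :=
  (((x 1 ^ 2 + a ^ 2) / Del M a Q x : ℝ) : ℂ) * pdC 0 f x + pdC 1 f x
    + ((a / Del M a Q x : ℝ) : ℂ) * pdC 3 f x

/-- `e₃ = ((r²+a²)/|q|²)∂_t − (Δ/|q|²)∂_r + (a/|q|²)∂_φ` as an operator on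
complex functions. -/
def e3 (M a Q : ℝ) (f : Pt → ℂ) (x : Pt) : ℂ :=
  (((x 1 ^ 2 + a ^ 2) / q2 a x : ℝ) : ℂ) * pdC 0 f x
    - ((Del M a Q x / q2 a x : ℝ) : ℂ) * pdC 1 f x
    + ((a / q2 a x : ℝ) : ℂ) * pdC 3 f x

/-- `e₁ = (1/√(|q|²))∂_θ` as an operator on complex functions. -/
def e1 (a : ℝ) (f : Pt → ℂ) (x : Pt) : ℂ :=
  ((1 / Real.sqrt (q2 a x) : ℝ) : ℂ) * pdC 2 f x

/-- `e₂ = (a sinθ/√(|q|²))∂_t + (1/(√(|q|²) sinθ))∂_φ` as an operator on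
complex functions. -/
def e2 (a : ℝ) (f : Pt → ℂ) (x : Pt) : ℂ :=
  ((a * Real.sin (x 2) / Real.sqrt (q2 a x) : ℝ) : ℂ) * pdC 0 f x
    + ((1 / (Real.sqrt (q2 a x) * Real.sin (x 2)) : ℝ) : ℂ) * pdC 3 f x

/-- `e₄` as an operator on real-valued functions. -/
def e4R (M a Q : ℝ) (f : Pt → ℝ) (x : Pt) : ℝ :=
  ((x 1 ^ 2 + a ^ 2) / Del M a Q x) * pdR 0 f x + pdR 1 f x
    + (a / Del M a Q x) * pdR 3 f x

/-- `trX = 2/q`. -/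
def trX (a : ℝ) (x : Pt) : ℂ := 2 / qC a x

/-- `tr X̲ = −2Δ/(q q̄²)`. -/
def trXb (M a Q : ℝ) (x : Pt) : ℂ :=
  -2 * ((Del M a Q x : ℝ) : ℂ) / (qC a x * qbarC a x ^ 2)

/-- `H₁ = i a sinθ · q / |q|³`. -/
def H1 (a : ℝ) (x : Pt) : ℂ :=
  Complex.I * (a : ℂ) * (Real.sin (x 2) : ℂ) * qC a x
    / ((Real.sqrt (q2 a x) ^ 3 : ℝ) : ℂ)

/-- `H̲₁ = −i a sinθ · q̄ / |q|³`. -/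
def Hb1 (a : ℝ) (x : Pt) : ℂ :=
  -(Complex.I * (a : ℂ) * (Real.sin (x 2) : ℂ) * qbarC a x
    / ((Real.sqrt (q2 a x) ^ 3 : ℝ) : ℂ))

/-- `Z₁ = i a sinθ · q̄ / |q|³`. -/
def Z1 (a : ℝ) (x : Pt) : ℂ :=
  Complex.I * (a : ℂ) * (Real.sin (x 2) : ℂ) * qbarC a x
    / ((Real.sqrt (q2 a x) ^ 3 : ℝ) : ℂ)

/-- `P^F = Q/q̄²`. -/
def PF (a Q : ℝ) (x : Pt) : ℂ := (Q : ℂ) / qbarC a x ^ 2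

/-- `P = −2M/q³ + 2Q²/(q³ q̄)`. -/
def Pc (M a Q : ℝ) (x : Pt) : ℂ :=
  -2 * (M : ℂ) / qC a x ^ 3 + 2 * (Q : ℂ) ^ 2 / (qC a x ^ 3 * qbarC a x)

/-- `ω̲ = (a² cos²θ (r−M) + Mr² − a²r − Q²r)/|q|⁴`. -/
def omb (M a Q : ℝ) (x : Pt) : ℝ :=
  (a ^ 2 * Real.cos (x 2) ^ 2 * (x 1 - M) + M * x 1 ^ 2 - a ^ 2 * x 1 - Q ^ 2 * x 1)
    / q2 a x ^ 2

/-- `trχ̲ = −2rΔ/|q|⁴`. -/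
def trchib (M a Q : ℝ) (x : Pt) : ℝ := -(2 * x 1 * Del M a Q x) / q2 a x ^ 2

/-- `atrχ̲ = 2aΔ cosθ/|q|⁴`. -/
def atrchib (M a Q : ℝ) (x : Pt) : ℝ :=
  2 * a * Del M a Q x * Real.cos (x 2) / q2 a x ^ 2

/-- `atrχ = 2a cosθ/|q|²`. -/
def atrchi (a : ℝ) (x : Pt) : ℝ := 2 * a * Real.cos (x 2) / q2 a x

/-- `η₁ = −a² sinθ cosθ/|q|³`. -/
def eta1 (a : ℝ) (x : Pt) : ℝ :=
  -(a ^ 2 * Real.sin (x 2) * Real.cos (x 2)) / Real.sqrt (q2 a x) ^ 3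

/-- `η₂ = a r sinθ/|q|³`. -/
def eta2 (a : ℝ) (x : Pt) : ℝ := a * x 1 * Real.sin (x 2) / Real.sqrt (q2 a x) ^ 3

/-- `η̲₁ = −a² sinθ cosθ/|q|³`. -/
def etab1 (a : ℝ) (x : Pt) : ℝ :=
  -(a ^ 2 * Real.sin (x 2) * Real.cos (x 2)) / Real.sqrt (q2 a x) ^ 3

/-- `η̲₂ = −a r sinθ/|q|³`. -/
def etab2 (a : ℝ) (x : Pt) : ℝ := -(a * x 1 * Real.sin (x 2)) / Real.sqrt (q2 a x) ^ 3

/-- `*η₁ = a r sinθ/|q|³`. -/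
def seta1 (a : ℝ) (x : Pt) : ℝ := a * x 1 * Real.sin (x 2) / Real.sqrt (q2 a x) ^ 3

/-- `*η₂ = a² sinθ cosθ/|q|³`. -/
def seta2 (a : ℝ) (x : Pt) : ℝ :=
  a ^ 2 * Real.sin (x 2) * Real.cos (x 2) / Real.sqrt (q2 a x) ^ 3

/-- `*η̲₁ = −a r sinθ/|q|³`. -/
def setab1 (a : ℝ) (x : Pt) : ℝ := -(a * x 1 * Real.sin (x 2)) / Real.sqrt (q2 a x) ^ 3

/-- `*η̲₂ = a² sinθ cosθ/|q|³`. -/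
def setab2 (a : ℝ) (x : Pt) : ℝ :=
  a ^ 2 * Real.sin (x 2) * Real.cos (x 2) / Real.sqrt (q2 a x) ^ 3

/-- `ρ = (−2Mr³ + 2Q²r² + 6Ma²r cos²θ − 2Q²a² cos²θ)/|q|⁶`. -/
def rho (M a Q : ℝ) (x : Pt) : ℝ :=
  (-2 * M * x 1 ^ 3 + 2 * Q ^ 2 * x 1 ^ 2 + 6 * M * a ^ 2 * x 1 * Real.cos (x 2) ^ 2
      - 2 * Q ^ 2 * a ^ 2 * Real.cos (x 2) ^ 2) / q2 a x ^ 3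

/-- `tr X̲ = trχ̲ − i atrχ̲` (component form). -/
def trXbC (M a Q : ℝ) (x : Pt) : ℂ :=
  ((trchib M a Q x : ℝ) : ℂ) - Complex.I * ((atrchib M a Q x : ℝ) : ℂ)

/-- `C = c·trχ̲ + i p·atrχ̲`. -/
def Cfun (M a Q c p : ℝ) (x : Pt) : ℂ :=
  ((c * trchib M a Q x : ℝ) : ℂ) + Complex.I * ((p : ℝ) : ℂ) * ((atrchib M a Q x : ℝ) : ℂ)


open Complex ContinuousLinearMap ComplexConjugate

theorem qC_ne_zero {a : ℝ} {x : Pt} (hr : 0 < x 1) : qC a x ≠ 0 := by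
  intro h
  simpa [qC, hr.ne'] using congrArg Complex.re h

theorem qbarC_ne_zero {a : ℝ} {x : Pt} (hr : 0 < x 1) : qbarC a x ≠ 0 := by
  intro h
  simpa [qbarC, hr.ne'] using congrArg Complex.re h

theorem conj_qC (a : ℝ) (x : Pt) : conj (qC a x) = qbarC a x := by
  simp only [qC, qbarC, map_add, map_mul, conj_I, conj_ofReal]
  ring

theorem conj_qbarC (a : ℝ) (x : Pt) : conj (qbarC a x) = qC a x := by
  rw [← conj_qC, conj_conj]

theorem ofReal_q2 (a : ℝ) (x : Pt) : (q2 a x : ℂ) = qC a x * qbarC a x := by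
  simp only [q2, qC, qbarC, ofReal_add, ofReal_pow, ofReal_mul]
  linear_combination ((a : ℂ) ^ 2 * (Real.cos (x 2) : ℂ) ^ 2) * I_sq

theorem ofReal_sqrt_q2_pow_three (a : ℝ) (x : Pt) :
    ((√(q2 a x) ^ 3 : ℝ) : ℂ) = √(q2 a x) * (qC a x * qbarC a x) := by
  have hq2 : 0 ≤ q2 a x := by unfold q2; positivity
  have hsq : ((√(q2 a x) : ℝ) : ℂ) ^ 2 = q2 a x := by exact_mod_cast Real.sq_sqrt hq2
  rw [← ofReal_q2, ← hsq]
  push_cast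
  ring

theorem sqrt_q2_pos {a : ℝ} {x : Pt} (hr : 0 < x 1) : 0 < √(q2 a x) :=
  Real.sqrt_pos.2 (by unfold q2; positivity)

def drAddDθ (c : ℂ) : Pt →L[ℝ] ℂ :=
  (proj 1 : Pt →L[ℝ] ℝ).smulRight (1 : ℂ) + (proj 2 : Pt →L[ℝ] ℝ).smulRight c

@[simp]
theorem drAddDθ_apply (c : ℂ) (v : Pt) : drAddDθ c v = v 1 + c * v 2 := by
  simp [drAddDθ, mul_comm]

theorem hasFDerivAt_ofReal_add_mul_cos (b : ℂ) (x : Pt) :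
    HasFDerivAt (fun y : Pt => (y 1 : ℂ) + b * Real.cos (y 2))
      (drAddDθ (-(b * Real.sin (x 2)))) x := by
  have hr := ofRealCLM.hasFDerivAt.comp x (proj 1 : Pt →L[ℝ] ℝ).hasFDerivAt
  have hθ := (ofRealCLM.hasFDerivAt.comp x ((Real.hasDerivAt_cos (x 2)).comp_hasFDerivAt x
    (proj 2 : Pt →L[ℝ] ℝ).hasFDerivAt)).const_mul b
  refine (hr.add hθ).congr_fderiv ?_
  ext v
  simp [mul_comm, mul_left_comm]

theorem hasFDerivAt_qC (a : ℝ) (x : Pt) :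
    HasFDerivAt (qC a) (drAddDθ (-(I * a * Real.sin (x 2)))) x :=
  hasFDerivAt_ofReal_add_mul_cos (I * a) x

theorem hasFDerivAt_qbarC (a : ℝ) (x : Pt) :
    HasFDerivAt (qbarC a) (drAddDθ (I * a * Real.sin (x 2))) x := by
  have hq : qbarC a = fun y : Pt => (y 1 : ℂ) + -(I * a) * Real.cos (y 2) := by
    funext y
    rw [qbarC]
    ring
  rw [hq]
  convert hasFDerivAt_ofReal_add_mul_cos (-(I * a)) x using 3
  ring

def Pform (M Q : ℝ) (z w : ℂ) : ℂ := -2 * M / z ^ 3 + 2 * Q ^ 2 / (z ^ 3 * w)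

theorem Pc_eq_Pform (M a Q : ℝ) : Pc M a Q = fun y => Pform M Q (qC a y) (qbarC a y) := rfl

theorem conj_Pc (M a Q : ℝ) (y : Pt) : conj (Pc M a Q y) = Pform M Q (qbarC a y) (qC a y) := by
  simp only [Pc, Pform, map_add, map_div₀, map_mul, map_pow, map_neg, map_ofNat, conj_ofReal,
    conj_qC, conj_qbarC]

theorem hasFDerivAt_Pform_comp {M Q : ℝ} {u v : Pt → ℂ} {u' v' : Pt →L[ℝ] ℂ} {x : Pt}
    (hu : HasFDerivAt u u' x) (hv : HasFDerivAt v v' x) (hu0 : u x ≠ 0) (hv0 : v x ≠ 0) :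
    HasFDerivAt (fun y => Pform M Q (u y) (v y))
      ((6 * M / u x ^ 4 - 6 * Q ^ 2 / (u x ^ 4 * v x)) • u'
        - (2 * Q ^ 2 / (u x ^ 3 * v x ^ 2)) • v') x := by
  have hinvu := (hasDerivAt_inv hu0).comp_hasFDerivAt x hu
  have hinvv := (hasDerivAt_inv hv0).comp_hasFDerivAt x hv
  have h := ((hinvu.pow 3).const_mul (-2 * M : ℂ)).add
    (((hinvu.pow 3).mul hinvv).const_mul (2 * Q ^ 2 : ℂ))
  refine (h.congr_fderiv ?_).congr_of_eventuallyEq (.of_forall fun y => ?_)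
  · ext w
    simp only [add_apply, sub_apply, smul_apply, smul_eq_mul, nsmul_eq_mul, Nat.add_one_sub_one,
      Function.comp_apply]
    field_simp
    ring
  · simp only [Pform, Function.comp_apply, Pi.add_apply, Pi.mul_apply]
    ring

theorem PF_mul_conj_PF (a Q : ℝ) (x : Pt) :
    PF a Q x * conj (PF a Q x) = Q ^ 2 / (qC a x ^ 2 * qbarC a x ^ 2) := by
  rw [PF, map_div₀, map_pow, conj_qbarC, conj_ofReal]
  ring

theorem pdC_eq_of_hasFDerivAt {f : Pt → ℂ} {f' : Pt →L[ℝ] ℂ} {x : Pt} (hf : HasFDerivAt f f' x)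
    (μ : Fin 4) : pdC μ f x = f' (Pi.single μ 1) := by
  rw [pdC, hf.fderiv]

theorem e1_add_I_mul_e2_of_pdC_zero {a : ℝ} {f : Pt → ℂ} {x : Pt} (h0 : pdC 0 f x = 0)
    (h3 : pdC 3 f x = 0) : e1 a f x + I * e2 a f x = pdC 2 f x / √(q2 a x) := by
  rw [e1, e2, h0, h3]
  push_cast
  ring

theorem e1_add_I_mul_e2_Pform_comp {M a Q : ℝ} {u v : Pt → ℂ} {c : ℂ} {x : Pt}
    (hu : HasFDerivAt u (drAddDθ c) x) (hv : HasFDerivAt v (drAddDθ (-c)) x)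
    (hu0 : u x ≠ 0) (hv0 : v x ≠ 0) :
    e1 a (fun y => Pform M Q (u y) (v y)) x + I * e2 a (fun y => Pform M Q (u y) (v y)) x
      = -c * (3 * Pform M Q (u x) (v x) - 2 * Q ^ 2 / (u x ^ 2 * v x ^ 2))
          / (√(q2 a x) * u x) := by
  have hP := hasFDerivAt_Pform_comp (M := M) (Q := Q) hu hv hu0 hv0
  rw [e1_add_I_mul_e2_of_pdC_zero (by simp [pdC_eq_of_hasFDerivAt hP])
    (by simp [pdC_eq_of_hasFDerivAt hP]), pdC_eq_of_hasFDerivAt hP]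
  simp only [sub_apply, smul_apply, drAddDθ_apply, Pi.single_eq_same,
    Pi.single_eq_of_ne (show (1 : Fin 4) ≠ 2 by decide), ofReal_zero, ofReal_one, smul_eq_mul, Pform]
  field_simp
  ring

theorem bianchi_angular_P_general (M a Q : ℝ) (x : Pt)
    (hr : 0 < x 1) :
    e1 a (fun y => (starRingEnd ℂ) (Pc M a Q y)) x
        + Complex.I * e2 a (fun y => (starRingEnd ℂ) (Pc M a Q y)) x
      = -(3 * (starRingEnd ℂ) (Pc M a Q x)
          - 2 * PF a Q x * (starRingEnd ℂ) (PF a Q x)) * H1 a x ∧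
    e1 a (Pc M a Q) x + Complex.I * e2 a (Pc M a Q) x
      = -(3 * Pc M a Q x - 2 * PF a Q x * (starRingEnd ℂ) (PF a Q x)) * Hb1 a x := by
  have hq := qC_ne_zero (a := a) hr
  have hqb := qbarC_ne_zero (a := a) hr
  have hs : (√(q2 a x) : ℂ) ≠ 0 := ofReal_ne_zero.2 (sqrt_q2_pos hr).ne'
  rw [mul_assoc 2, PF_mul_conj_PF, H1, Hb1, ofReal_sqrt_q2_pow_three]
  simp only [conj_Pc]
  constructor
  · rw [e1_add_I_mul_e2_Pform_comp (hasFDerivAt_qbarC a x) (hasFDerivAt_qC a x) hqb hq]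
    field_simp
  · rw [Pc_eq_Pform, e1_add_I_mul_e2_Pform_comp (hasFDerivAt_qC a x)
      (by rw [neg_neg]; exact hasFDerivAt_qbarC a x) hq hqb]
    field_simp

/-- on `D`, the reduced angular Bianchi equations of Kerr–Newman hold:
`(e₁+ie₂)(conj(P)) = −(3 conj(P) − 2 P^F conj(P^F)) H₁` and
`(e₁+ie₂)(P) = −(3P − 2 P^F conj(P^F)) H̲₁`. -/
theorem bianchi_angular_P (M a Q : ℝ) (x : Pt)
    (hr : 0 < x 1) (hθ₀ : 0 < x 2) (hθπ : x 2 < Real.pi)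
    (hΔ : Del M a Q x ≠ 0) :
    e1 a (fun y => (starRingEnd ℂ) (Pc M a Q y)) x
        + Complex.I * e2 a (fun y => (starRingEnd ℂ) (Pc M a Q y)) x
      = -(3 * (starRingEnd ℂ) (Pc M a Q x)
          - 2 * PF a Q x * (starRingEnd ℂ) (PF a Q x)) * H1 a x ∧
    e1 a (Pc M a Q) x + Complex.I * e2 a (Pc M a Q) x
      = -(3 * Pc M a Q x - 2 * PF a Q x * (starRingEnd ℂ) (PF a Q x)) * Hb1 a x :=
  bianchi_angular_P_general M a Q x hr

end KerrNewman
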